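/- Let F be a field of characteristic zero and α ∈ F. Then: (i) the nonvanishing rising factorial (α)_k^* is nonzero for every k ∈ ℤ; and (ii) both sequences T(k) = (α)_k and T(k) = (α)_k^* satisfy, for every k ∈ ℤ, the recurrence (k + α)·T(k+1) − (k + α)^2·T(k) = 0 (so (α)_k and (α)_k^* are solutions of a common first-order recurrence). -/

import Mathlib

/-!
Away from `k + α = 0` both sequences obey `T (k + 1) = (k + α) * T k`, which gives the recurrence;
at `k + α = 0` it holds trivially. `(α)_k` vanishes exactly when `α` is an integer `a` with
`a > 0 ≥ a + k` or `a ≤ 0 < a + k`; there `(α)_k^*` is a product of two rising factorials evaluated at integer points where neither vanishes, and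
the step relation for `(α)_k^*` reduces to the one for `(0)_•` or `(1)_•`.
-/

open scoped Classical

/-- The rising factorial `(α)_k` for `α ∈ F` and `k ∈ ℤ`:
`(α)_k = ∏_{i=0}^{k−1}(α + i)` if `k ≥ 0`;
`(α)_k = ∏_{i=1}^{−k}(α − i)⁻¹` if `k < 0` and `α ∉ {1, 2, …, −k}`; and
`(α)_k = 0` otherwise. -/
noncomputable def risingFactorial {F : Type*} [Field F] [CharZero F] (α : F) (k : ℤ) : F :=
  if 0 ≤ k then ∏ i ∈ Finset.range k.toNat, (α + i)
  else if ∃ i ∈ Finset.Icc 1 (-k).toNat, α = (i : F) then 0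
  else ∏ i ∈ Finset.Icc 1 (-k).toNat, (α - i)⁻¹

/-- The nonvanishing rising factorial `(α)_k^*`:
`(α)_k^* = (α)_k` if `(α)_k ≠ 0`;
`(α)_k^* = (α)_{1−α}·(0)_{α+k}` if `α` is a positive integer and `α + k ≤ 0`; and
`(α)_k^* = (α)_{−α}·(1)_{α+k−1}` if `α` is a nonpositive integer and `α + k > 0`. -/
noncomputable def risingFactorialStar {F : Type*} [Field F] [CharZero F]
    (α : F) (k : ℤ) : F :=
  if risingFactorial α k ≠ 0 then risingFactorial α k
  else if h : ∃ a : ℤ, (a : F) = α ∧ 0 < a ∧ a + k ≤ 0 then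
    risingFactorial α (1 - h.choose) * risingFactorial 0 (h.choose + k)
  else if h : ∃ a : ℤ, (a : F) = α ∧ a ≤ 0 ∧ 0 < a + k then
    risingFactorial α (-h.choose) * risingFactorial 1 (h.choose + k - 1)
  else 0

section

variable {F : Type*} [Field F] [CharZero F]

theorem risingFactorial_natCast (α : F) (n : ℕ) :
    risingFactorial α n = ∏ i ∈ Finset.range n, (α + i) := by
  simp [risingFactorial]

/-- The junk value `0⁻¹ = 0` makes the inverse product vanish exactly in the "otherwise" case
of the definition. -/
theorem risingFactorial_neg_natCast (α : F) (n : ℕ) :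
    risingFactorial α (-n) = (∏ i ∈ Finset.Icc 1 n, (α - i))⁻¹ := by
  rcases Nat.eq_zero_or_pos n with rfl | hn
  · simp [risingFactorial]
  have hneg : ¬ (0 : ℤ) ≤ -n := by omega
  simp only [risingFactorial, if_neg hneg, neg_neg, Int.toNat_natCast]
  split_ifs with hzero
  · obtain ⟨i, hi, rfl⟩ := hzero
    rw [Finset.prod_eq_zero hi (sub_self _), inv_zero]
  · rw [Finset.prod_inv_distrib]

theorem risingFactorial_succ (α : F) (k : ℤ) (h : (k : F) + α ≠ 0) :
    risingFactorial α (k + 1) = ((k : F) + α) * risingFactorial α k := by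
  obtain ⟨n, rfl | rfl⟩ := Int.eq_nat_or_neg k
  · rw [← Nat.cast_succ, risingFactorial_natCast, risingFactorial_natCast,
      Finset.prod_range_succ, Int.cast_natCast]
    ring
  · cases n with
    | zero => simp [risingFactorial]
    | succ m =>
      have hk : -((m + 1 : ℕ) : ℤ) + 1 = -(m : ℤ) := by push_cast; ring
      have hc : ((-((m + 1 : ℕ) : ℤ) : ℤ) : F) + α = α - ((m + 1 : ℕ) : F) := by
        push_cast; ring
      rw [hc] at h ⊢
      rw [hk, risingFactorial_neg_natCast, risingFactorial_neg_natCast,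
        Finset.prod_Icc_succ_top (by omega), mul_inv, mul_left_comm, mul_inv_cancel₀ h, mul_one]

theorem risingFactorial_eq_zero_iff (α : F) (k : ℤ) :
    risingFactorial α k = 0 ↔
      (∃ a : ℤ, (a : F) = α ∧ 0 < a ∧ a + k ≤ 0) ∨ (∃ a : ℤ, (a : F) = α ∧ a ≤ 0 ∧ 0 < a + k) := by
  obtain ⟨n, rfl | rfl⟩ := Int.eq_nat_or_neg k
  · rw [risingFactorial_natCast, Finset.prod_eq_zero_iff]
    constructor
    · rintro ⟨i, hi, hzero⟩
      rw [Finset.mem_range] at hi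
      exact Or.inr ⟨-i, by push_cast; linear_combination -hzero, by omega, by omega⟩
    · rintro (⟨a, -, ha, han⟩ | ⟨a, rfl, ha, han⟩)
      · omega
      · obtain ⟨i, hi⟩ := Int.eq_ofNat_of_zero_le (neg_nonneg.mpr ha)
        refine ⟨i, Finset.mem_range.mpr (by omega), ?_⟩
        rw [show a = -(i : ℤ) by omega]
        push_cast
        ring
  · rw [risingFactorial_neg_natCast, inv_eq_zero, Finset.prod_eq_zero_iff]
    constructor
    · rintro ⟨i, hi, hzero⟩
      rw [Finset.mem_Icc] at hi
      exact Or.inl ⟨i, by push_cast; linear_combination -hzero, by omega, by omega⟩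
    · rintro (⟨a, rfl, ha, han⟩ | ⟨a, -, ha, han⟩)
      · obtain ⟨i, rfl⟩ := Int.eq_ofNat_of_zero_le ha.le
        exact ⟨i, Finset.mem_Icc.mpr (by omega), by push_cast; ring⟩
      · omega

theorem risingFactorial_intCast_eq_zero_iff (a k : ℤ) :
    risingFactorial (a : F) k = 0 ↔ 0 < a ∧ a + k ≤ 0 ∨ a ≤ 0 ∧ 0 < a + k := by
  simp only [risingFactorial_eq_zero_iff, Int.cast_inj, exists_eq_left]

theorem risingFactorialStar_of_ne_zero {α : F} {k : ℤ} (h : risingFactorial α k ≠ 0) :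
    risingFactorialStar α k = risingFactorial α k :=
  if_pos h

theorem risingFactorialStar_intCast_of_pos {a k : ℤ} (ha : 0 < a) (hak : a + k ≤ 0) :
    risingFactorialStar (a : F) k = risingFactorial (a : F) (1 - a) * risingFactorial 0 (a + k) := by
  have hzero : risingFactorial (a : F) k = 0 :=
    (risingFactorial_intCast_eq_zero_iff a k).mpr (Or.inl ⟨ha, hak⟩)
  have hex : ∃ b : ℤ, (b : F) = a ∧ 0 < b ∧ b + k ≤ 0 := ⟨a, rfl, ha, hak⟩
  rw [risingFactorialStar, if_neg (not_not.mpr hzero), dif_pos hex,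
    Int.cast_injective hex.choose_spec.1]

theorem risingFactorialStar_intCast_of_nonpos {a k : ℤ} (ha : a ≤ 0) (hak : 0 < a + k) :
    risingFactorialStar (a : F) k = risingFactorial (a : F) (-a) * risingFactorial 1 (a + k - 1) := by
  have hzero : risingFactorial (a : F) k = 0 :=
    (risingFactorial_intCast_eq_zero_iff a k).mpr (Or.inr ⟨ha, hak⟩)
  have hnex : ¬ ∃ b : ℤ, (b : F) = a ∧ 0 < b ∧ b + k ≤ 0 := by
    rintro ⟨b, hb, hb0, -⟩
    rw [Int.cast_injective hb] at hb0
    omega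
  have hex : ∃ b : ℤ, (b : F) = a ∧ b ≤ 0 ∧ 0 < b + k := ⟨a, rfl, ha, hak⟩
  rw [risingFactorialStar, if_neg (not_not.mpr hzero), dif_neg hnex, dif_pos hex,
    Int.cast_injective hex.choose_spec.1]

theorem risingFactorialStar_ne_zero (α : F) (k : ℤ) : risingFactorialStar α k ≠ 0 := by
  by_cases h : risingFactorial α k = 0
  · obtain ⟨a, rfl, ha, hak⟩ | ⟨a, rfl, ha, hak⟩ := (risingFactorial_eq_zero_iff α k).mp h
    · rw [risingFactorialStar_intCast_of_pos ha hak]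
      refine mul_ne_zero ?_ ?_
      · rw [Ne, risingFactorial_intCast_eq_zero_iff]; omega
      · exact_mod_cast (risingFactorial_intCast_eq_zero_iff (F := F) 0 (a + k)).not.mpr (by omega)
    · rw [risingFactorialStar_intCast_of_nonpos ha hak]
      refine mul_ne_zero ?_ ?_
      · rw [Ne, risingFactorial_intCast_eq_zero_iff]; omega
      · exact_mod_cast (risingFactorial_intCast_eq_zero_iff (F := F) 1 (a + k - 1)).not.mpr
          (by omega)
  · rwa [risingFactorialStar_of_ne_zero h]

theorem risingFactorialStar_succ (α : F) (k : ℤ) (h : (k : F) + α ≠ 0) :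
    risingFactorialStar α (k + 1) = ((k : F) + α) * risingFactorialStar α k := by
  by_cases hzero : risingFactorial α k = 0
  · obtain ⟨a, rfl, ha, hak⟩ | ⟨a, rfl, ha, hak⟩ := (risingFactorial_eq_zero_iff α k).mp hzero
    · have hne : a + k ≠ 0 := fun e ↦ h (by exact_mod_cast (by omega : k + a = 0))
      rw [risingFactorialStar_intCast_of_pos ha (by omega), risingFactorialStar_intCast_of_pos ha hak,
        ← add_assoc, risingFactorial_succ 0 (a + k) (by rw [add_zero]; exact_mod_cast hne)]
      push_cast
      ring
    · rw [risingFactorialStar_intCast_of_nonpos ha (by omega),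
        risingFactorialStar_intCast_of_nonpos ha hak, show a + (k + 1) - 1 = a + k - 1 + 1 by ring,
        risingFactorial_succ 1 (a + k - 1) (by norm_cast; omega)]
      push_cast
      ring
  · have hsucc := risingFactorial_succ α k h
    rw [risingFactorialStar_of_ne_zero hzero,
      risingFactorialStar_of_ne_zero (hsucc ▸ mul_ne_zero h hzero), hsucc]

end

theorem risingFactorialStar_nonzero_and_common_recurrence
    (F : Type*) [Field F] [CharZero F] (α : F) (k : ℤ) :
    risingFactorialStar α k ≠ 0 ∧
    ((k : F) + α) * risingFactorial α (k + 1)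
      - ((k : F) + α) ^ 2 * risingFactorial α k = 0 ∧
    ((k : F) + α) * risingFactorialStar α (k + 1)
      - ((k : F) + α) ^ 2 * risingFactorialStar α k = 0 := by
  have recurrence (T : ℤ → F) (hT : (k : F) + α ≠ 0 → T (k + 1) = ((k : F) + α) * T k) :
      ((k : F) + α) * T (k + 1) - ((k : F) + α) ^ 2 * T k = 0 := by
    by_cases hc : (k : F) + α = 0
    · rw [hc]; ring
    · rw [hT hc]; ring
  exact ⟨risingFactorialStar_ne_zero α k, recurrence _ (risingFactorial_succ α k),
    recurrence _ (risingFactorialStar_succ α k)⟩
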